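/- Let P = det(A_0 + U·X·V^T) with U, V ∈ F(ε)^{r×n}, A_0 ∈ F(ε)^{r×r}, and X the n×n diagonal matrix of variables x_1,…,x_n. Let X' be the (2n+r)×(2n+r) diagonal matrix of variables x_1,…,x_{2n+r}. Then there exist U', V' ∈ F(ε)^{(n+r)×(2n+r)} such that: (1) substituting x_{n+1} = ⋯ = x_{2n+r} = 1 into det(U'·X'·V'^T) yields P; and (2) if lim_{ε→0} P exists, then lim_{ε→0} det(U'·X'·V'^T) exists. -/

import Mathlib

open Polynomial Matrix MvPolynomial
open scoped Classical

/-- The ε-adic valuation on F(ε): `val(g/h) = mindeg g - mindeg h` for nonzero elements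
(`mindeg p = rootMultiplicity 0 p`), and `val 0 = +∞`. -/
noncomputable def rfval {F : Type*} [Field F] (f : RatFunc F) : WithTop ℤ :=
  if f = 0 then ⊤
  else (((f.num.rootMultiplicity 0 : ℤ) - (f.denom.rootMultiplicity 0 : ℤ) : ℤ) : WithTop ℤ)

/-- `lim_{ε→0} f` exists iff `f` has no pole at ε = 0, i.e. val(f) ≥ 0. -/
def rfHasLim {F : Type*} [Field F] (f : RatFunc F) : Prop := 0 ≤ rfval f

/-- The value of `f` at ε = 0 (the limit of `f` at 0, when it exists). -/
noncomputable def rfLim {F : Type*} [Field F] (f : RatFunc F) : F :=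
  f.eval (RingHom.id F) 0

/-- The symbolic determinant det(A_0 + U·X·Vᵀ) as a polynomial in x_1,…,x_n. -/
noncomputable def symDet {F : Type*} [Field F] {r n : ℕ}
    (A0 : Matrix (Fin r) (Fin r) (RatFunc F)) (U V : Matrix (Fin r) (Fin n) (RatFunc F)) :
    MvPolynomial (Fin n) (RatFunc F) :=
  (A0.map (MvPolynomial.C : RatFunc F →+* MvPolynomial (Fin n) (RatFunc F)) +
      U.map (MvPolynomial.C : RatFunc F →+* MvPolynomial (Fin n) (RatFunc F)) *
        Matrix.diagonal (fun i : Fin n => (X i : MvPolynomial (Fin n) (RatFunc F))) *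
        (V.map (MvPolynomial.C : RatFunc F →+* MvPolynomial (Fin n) (RatFunc F)))ᵀ).det

namespace A2H

variable {F : Type*} [Field F] {r n : ℕ}

def ι₁ (j : Fin n) : Fin (2 * n + r) := ⟨j.1, by have := j.isLt; omega⟩
def ι₂ (j : Fin n) : Fin (2 * n + r) := ⟨n + j.1, by have := j.isLt; omega⟩
def ι₃ (k : Fin r) : Fin (2 * n + r) := ⟨n + n + k.1, by have := k.isLt; omega⟩

def e₂ : (Fin n ⊕ (Fin n ⊕ Fin r)) ≃ Fin (2 * n + r) :=
  ((Equiv.sumCongr (Equiv.refl (Fin n)) finSumFinEquiv).trans finSumFinEquiv).trans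
    (finCongr (by omega))

@[simp] lemma e₂_inl (j : Fin n) : (e₂ (r := r) (Sum.inl j)) = ι₁ j := by
  apply Fin.ext; simp [e₂, ι₁]

@[simp] lemma e₂_inrl (j : Fin n) : (e₂ (r := r) (Sum.inr (Sum.inl j))) = ι₂ j := by
  apply Fin.ext; simp [e₂, ι₂]

@[simp] lemma e₂_inrr (k : Fin r) : (e₂ (n := n) (Sum.inr (Sum.inr k))) = ι₃ k := by
  apply Fin.ext; simp [e₂, ι₃]; omega

lemma ι₁_ne_ι₂ (j j' : Fin n) : (ι₁ j : Fin (2*n+r)) ≠ ι₂ j' := by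
  simp only [ι₁, ι₂, ne_eq, Fin.mk.injEq]; have := j.isLt; omega
lemma ι₁_ne_ι₃ (j : Fin n) (k : Fin r) : (ι₁ j : Fin (2*n+r)) ≠ ι₃ k := by
  simp only [ι₁, ι₃, ne_eq, Fin.mk.injEq]; have := j.isLt; omega
lemma ι₂_ne_ι₃ (j : Fin n) (k : Fin r) : (ι₂ j : Fin (2*n+r)) ≠ ι₃ k := by
  simp only [ι₂, ι₃, ne_eq, Fin.mk.injEq]; have := j.isLt; omega
@[simp] lemma ι₁_inj (j j' : Fin n) : (ι₁ j : Fin (2*n+r)) = ι₁ j' ↔ j = j' := by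
  simp [ι₁, Fin.ext_iff]
@[simp] lemma ι₂_inj (j j' : Fin n) : (ι₂ j : Fin (2*n+r)) = ι₂ j' ↔ j = j' := by
  simp [ι₂, Fin.ext_iff]
@[simp] lemma ι₃_inj (k k' : Fin r) : (ι₃ k : Fin (2*n+r)) = ι₃ k' ↔ k = k' := by
  simp [ι₃, Fin.ext_iff]

variable (A0 : Matrix (Fin r) (Fin r) (RatFunc F)) (U V : Matrix (Fin r) (Fin n) (RatFunc F))

/-- coefficient matrix: `fromBlocks 1 Vᵀ (-U) A0`. -/
noncomputable def cM : Matrix (Fin n ⊕ Fin r) (Fin n ⊕ Fin r) (RatFunc F) :=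
  Matrix.fromBlocks 1 Vᵀ (-U) A0

/-- which variable sits at entry (row, col). -/
def varM : (Fin n ⊕ Fin r) → (Fin n ⊕ Fin r) → Fin (2 * n + r) := fun a b =>
  match a, b with
  | .inl _, .inl j => ι₂ j
  | .inr _, .inl j => ι₁ j
  | _, .inr k => ι₃ k

noncomputable def U₀ : Matrix (Fin n ⊕ Fin r) (Fin n ⊕ (Fin n ⊕ Fin r)) (RatFunc F) :=
  Matrix.fromBlocks 0 (Matrix.fromCols 1 Vᵀ) (-U) (Matrix.fromCols 0 A0)

noncomputable def V₀ : Matrix (Fin n ⊕ Fin r) (Fin n ⊕ (Fin n ⊕ Fin r)) (RatFunc F) :=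
  Matrix.fromBlocks 1 (Matrix.fromCols 1 0) 0 (Matrix.fromCols 0 1)

noncomputable def Umat : Matrix (Fin (n + r)) (Fin (2 * n + r)) (RatFunc F) :=
  (U₀ A0 U V).submatrix finSumFinEquiv.symm e₂.symm

noncomputable def Vmat : Matrix (Fin (n + r)) (Fin (2 * n + r)) (RatFunc F) :=
  (V₀ (F := F) (r := r) (n := n)).submatrix finSumFinEquiv.symm e₂.symm

noncomputable def Mmat : Matrix (Fin n ⊕ Fin r) (Fin n ⊕ Fin r)
    (MvPolynomial (Fin (2 * n + r)) (RatFunc F)) :=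
  Matrix.of fun a b => MvPolynomial.C (cM A0 U V a b) * X (varM a b)

lemma sum_key (a' b' : Fin n ⊕ Fin r) :
    (∑ γ : Fin n ⊕ (Fin n ⊕ Fin r),
        MvPolynomial.C (U₀ A0 U V a' γ) * (X (e₂ γ) : MvPolynomial (Fin (2*n+r)) (RatFunc F)) *
          MvPolynomial.C (V₀ (F := F) b' γ))
      = MvPolynomial.C (cM A0 U V a' b') * X (varM a' b') := by
  rcases a' with i | k <;> rcases b' with j | k' <;>
    simp [U₀, V₀, cM, varM, Fintype.sum_sum_type, Matrix.fromCols,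
      Matrix.one_apply, apply_ite, mul_ite, ite_mul, Finset.sum_ite_eq, Finset.sum_ite_eq'] <;> intros <;> simp_all

lemma stepA : symDet 0 (Umat A0 U V) (Vmat (F := F) (r := r) (n := n)) = (Mmat A0 U V).det := by
  unfold symDet
  rw [Matrix.map_zero _ (map_zero _), zero_add]
  have hM : (Umat A0 U V).map (MvPolynomial.C : RatFunc F →+* MvPolynomial (Fin (2*n+r)) (RatFunc F)) *
        Matrix.diagonal (fun i : Fin (2*n+r) => (X i : MvPolynomial (Fin (2*n+r)) (RatFunc F))) *
        ((Vmat (F := F) (r := r) (n := n)).map (MvPolynomial.C : RatFunc F →+* MvPolynomial (Fin (2*n+r)) (RatFunc F)))ᵀ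
      = (Mmat A0 U V).submatrix finSumFinEquiv.symm finSumFinEquiv.symm := by
    refine Matrix.ext fun a b => ?_
    rw [Matrix.mul_apply]
    simp only [Matrix.mul_diagonal, Matrix.transpose_apply, Matrix.map_apply,
      Matrix.submatrix_apply, Umat, Vmat, Mmat, Matrix.of_apply]
    rw [← sum_key A0 U V (finSumFinEquiv.symm a) (finSumFinEquiv.symm b)]
    exact Fintype.sum_equiv e₂.symm _ _ (fun c => by simp)
  rw [hM, Matrix.det_submatrix_equiv_self]

noncomputable def σf : Fin (2 * n + r) → MvPolynomial (Fin n) (RatFunc F) := fun i =>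
  if h : (i : ℕ) < n then (X (⟨(i : ℕ), h⟩ : Fin n) : MvPolynomial (Fin n) (RatFunc F)) else 1

@[simp] lemma σf_ι₁ (j : Fin n) : σf (F := F) (r := r) (ι₁ j) = X j := by
  have h : ((ι₁ j : Fin (2*n+r)) : ℕ) < n := j.isLt
  simp only [σf, dif_pos h]
  congr 1

@[simp] lemma σf_ι₂ (j : Fin n) : σf (F := F) (r := r) (ι₂ j) = 1 := by
  have h : ¬ ((ι₂ j : Fin (2*n+r)) : ℕ) < n := by simp [ι₂]
  
  simp only [σf, dif_neg h]

@[simp] lemma σf_ι₃ (k : Fin r) : σf (F := F) (n := n) (ι₃ k) = 1 := by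
  have h : ¬ ((ι₃ k : Fin (2*n+r)) : ℕ) < n := by simp [ι₃]; omega
  
  simp only [σf, dif_neg h]

lemma stepB : MvPolynomial.aeval (σf (F := F)) (Mmat A0 U V).det = symDet A0 U V := by
  rw [show (MvPolynomial.aeval (σf (F := F)) (Mmat A0 U V).det)
      = ((Mmat A0 U V).map (MvPolynomial.aeval (σf (F := F)))).det from
    RingHom.map_det (MvPolynomial.aeval (σf (F := F))).toRingHom (Mmat A0 U V)]
  have hmap : (Mmat A0 U V).map (MvPolynomial.aeval (σf (F := F)))
      = Matrix.fromBlocks 1 (Vᵀ.map MvPolynomial.C)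
          (-(U.map (MvPolynomial.C : RatFunc F →+* MvPolynomial (Fin n) (RatFunc F))) *
            Matrix.diagonal (fun j : Fin n => (X j : MvPolynomial (Fin n) (RatFunc F))))
          (A0.map MvPolynomial.C) := by
    ext a b : 1
    rcases a with i | k <;> rcases b with j | k'
    all_goals
      simp [Mmat, cM, varM, Matrix.one_apply, apply_ite, Matrix.mul_diagonal,
        MvPolynomial.algebraMap_eq]
    all_goals (try split_ifs <;> simp_all)
  rw [hmap, Matrix.det_fromBlocks_one₁₁]
  unfold symDet
  rw [Matrix.neg_mul, Matrix.neg_mul, sub_neg_eq_add, Matrix.transpose_map]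

noncomputable def proj (d : Fin (2 * n + r) →₀ ℕ) : Fin n →₀ ℕ :=
  Finsupp.equivFunOnFinite.symm (fun j => d (ι₁ j))

@[simp] lemma proj_apply (d : Fin (2 * n + r) →₀ ℕ) (j : Fin n) : proj d j = d (ι₁ j) := by
  simp [proj]

def Dp (d : Fin (2 * n + r) →₀ ℕ) : Prop :=
  (∀ j : Fin n, d (ι₁ j) + d (ι₂ j) = 1) ∧ ∀ k : Fin r, d (ι₃ k) = 1

lemma proj_injOn {d₁ d₂ : Fin (2 * n + r) →₀ ℕ} (h₁ : Dp d₁) (h₂ : Dp d₂)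
    (h : proj d₁ = proj d₂) : d₁ = d₂ := by
  have hv : ∀ j : Fin n, d₁ (ι₁ j) = d₂ (ι₁ j) := by
    intro j
    have := congrArg (fun f => f j) h
    simpa using this
  ext v
  by_cases hv1 : (v : ℕ) < n
  · have hvv : v = ι₁ ⟨v, hv1⟩ := by apply Fin.ext; simp [ι₁]
    rw [hvv]; exact hv _
  · by_cases hv2 : (v : ℕ) < n + n
    · have hvv : v = ι₂ ⟨(v : ℕ) - n, by omega⟩ := by apply Fin.ext; simp [ι₂]; omega
      rw [hvv]
      have e1 := h₁.1 ⟨(v : ℕ) - n, by omega⟩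
      have e2 := h₂.1 ⟨(v : ℕ) - n, by omega⟩
      have e3 := hv ⟨(v : ℕ) - n, by omega⟩
      omega
    · have hvv : v = ι₃ ⟨(v : ℕ) - (n + n), by have := v.isLt; omega⟩ := by
        apply Fin.ext; simp [ι₃]; omega
      rw [hvv, h₁.2, h₂.2]

lemma aeval_monomial_σf (d : Fin (2 * n + r) →₀ ℕ) (c : RatFunc F) :
    MvPolynomial.aeval (σf (F := F)) (monomial d c) = monomial (proj d) c := by
  rw [MvPolynomial.aeval_monomial, MvPolynomial.monomial_eq, MvPolynomial.algebraMap_eq]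
  congr 1
  rw [Finsupp.prod_fintype _ _ (fun v => pow_zero _),
    Finsupp.prod_fintype _ _ (fun j => pow_zero _),
    ← Equiv.prod_comp e₂ (fun v => σf (F := F) v ^ d v), Fintype.prod_sum_type,
    Fintype.prod_sum_type]
  simp

lemma prod_X_single {τ : Type*} {ι : Type*} (s : Finset ι) (v : ι → τ) :
    (∏ i ∈ s, (X (v i) : MvPolynomial τ (RatFunc F)))
      = monomial (∑ i ∈ s, Finsupp.single (v i) 1) 1 := by
  classical
  induction s using Finset.induction with
  | empty => simp [MvPolynomial.monomial_zero']
  | insert a s h ih =>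
      rw [Finset.prod_insert h, Finset.sum_insert h, ih, MvPolynomial.X,
        MvPolynomial.monomial_mul, one_mul]

noncomputable def dπ (π : Equiv.Perm (Fin n ⊕ Fin r)) : Fin (2 * n + r) →₀ ℕ :=
  ∑ i : Fin n ⊕ Fin r, Finsupp.single (varM (π i) i) 1

lemma dπ_apply (π : Equiv.Perm (Fin n ⊕ Fin r)) (v : Fin (2 * n + r)) :
    dπ π v = ∑ i : Fin n ⊕ Fin r, if varM (π i) i = v then 1 else 0 := by
  rw [dπ, Finsupp.finset_sum_apply]
  exact Finset.sum_congr rfl fun i _ => by rw [Finsupp.single_apply]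

lemma dπ_Dp (π : Equiv.Perm (Fin n ⊕ Fin r)) : Dp (dπ π) := by
  constructor
  · intro j
    rw [dπ_apply, dπ_apply, ← Finset.sum_add_distrib,
      show (1 : ℕ) = ∑ i : Fin n ⊕ Fin r, if i = Sum.inl j then 1 else 0 by simp]
    refine Finset.sum_congr rfl fun i _ => ?_
    rcases i with j' | k'
    · rcases hπ : π (Sum.inl j') with a | a <;>
        simp [varM, (ι₁_ne_ι₂ j j').symm, ι₁_ne_ι₂ j' j, Fin.ext_iff, ι₁, ι₂] <;> omega
    · rcases hπ : π (Sum.inr k') with a | a <;>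
        simp [varM, Fin.ext_iff, ι₁, ι₂, ι₃] <;> omega
  · intro k
    rw [dπ_apply,
      show (1 : ℕ) = ∑ i : Fin n ⊕ Fin r, if i = Sum.inr k then 1 else 0 by simp]
    refine Finset.sum_congr rfl fun i _ => ?_
    rcases i with j' | k'
    · rcases hπ : π (Sum.inl j') with a | a <;>
        simp [varM, Fin.ext_iff, ι₁, ι₂, ι₃] <;> omega
    · rcases hπ : π (Sum.inr k') with a | a <;>
        simp [varM, Fin.ext_iff, ι₃]
lemma prod_entries (π : Equiv.Perm (Fin n ⊕ Fin r)) :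
    (∏ i : Fin n ⊕ Fin r, Mmat A0 U V (π i) i)
      = monomial (dπ π) (∏ i : Fin n ⊕ Fin r, cM A0 U V (π i) i) := by
  simp only [Mmat, Matrix.of_apply]
  rw [Finset.prod_mul_distrib, ← map_prod, prod_X_single, MvPolynomial.C_mul_monomial, mul_one]
  rfl

lemma coeff_det_eq_zero {d : Fin (2 * n + r) →₀ ℕ} (hd : ¬ Dp d) :
    MvPolynomial.coeff d (Mmat A0 U V).det = 0 := by
  rw [Matrix.det_apply, MvPolynomial.coeff_sum]
  refine Finset.sum_eq_zero fun π _ => ?_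
  rw [prod_entries, MvPolynomial.coeff_smul, MvPolynomial.coeff_monomial,
    if_neg (fun h : dπ π = d => hd (h ▸ dπ_Dp π)), smul_zero]

lemma coeff_proj {d : Fin (2 * n + r) →₀ ℕ} (hd : Dp d) :
    MvPolynomial.coeff (proj d) (symDet A0 U V) = MvPolynomial.coeff d (Mmat A0 U V).det := by
  set Q := (Mmat A0 U V).det with hQ
  have hP : symDet A0 U V = ∑ d' ∈ Q.support, monomial (proj d') (MvPolynomial.coeff d' Q) := by
    rw [← stepB A0 U V, hQ]
    conv_lhs => rw [← MvPolynomial.support_sum_monomial_coeff ((Mmat A0 U V).det), ← hQ]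
    rw [map_sum]
    exact Finset.sum_congr rfl fun d' _ => aeval_monomial_σf _ _
  rw [hP, MvPolynomial.coeff_sum]
  rw [Finset.sum_eq_single d]
  · rw [MvPolynomial.coeff_monomial, if_pos rfl]
  · intro d' hd' hne
    have hDd' : Dp d' := by
      by_contra hcon
      exact (MvPolynomial.mem_support_iff.mp hd') (coeff_det_eq_zero A0 U V hcon)
    rw [MvPolynomial.coeff_monomial, if_neg]
    intro hp
    exact hne (proj_injOn hDd' hd hp)
  · intro hnot
    rw [MvPolynomial.coeff_monomial, if_pos rfl]
    exact MvPolynomial.notMem_support_iff.mp hnot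

lemma rfHasLim_zero : rfHasLim (0 : RatFunc F) := by
  simp [rfHasLim, rfval]

end A2H


/-- Reduction of the affine to the homogeneous case: for P = det(A_0 + U·X·Vᵀ) with
U, V ∈ F(ε)^{r×n}, there exist U', V' ∈ F(ε)^{(n+r)×(2n+r)} such that substituting
x_{n+1} = ⋯ = x_{2n+r} = 1 into det(U'·X'·V'ᵀ) yields P, and whenever lim_{ε→0} P exists
(coefficientwise) so does lim_{ε→0} det(U'·X'·V'ᵀ). -/
theorem affine_to_homogeneous {F : Type*} [Field F] {r n : ℕ}
    (A0 : Matrix (Fin r) (Fin r) (RatFunc F)) (U V : Matrix (Fin r) (Fin n) (RatFunc F)) :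
    ∃ U' V' : Matrix (Fin (n + r)) (Fin (2 * n + r)) (RatFunc F),
      (MvPolynomial.aeval
          (fun i : Fin (2 * n + r) =>
            if h : (i : ℕ) < n then (X (⟨(i : ℕ), h⟩ : Fin n) : MvPolynomial (Fin n) (RatFunc F))
            else 1)
          (symDet 0 U' V') = symDet A0 U V) ∧
      ((∀ d : (Fin n) →₀ ℕ, rfHasLim (MvPolynomial.coeff d (symDet A0 U V))) →
        ∀ d : (Fin (2 * n + r)) →₀ ℕ, rfHasLim (MvPolynomial.coeff d (symDet 0 U' V'))) := by
  refine ⟨A2H.Umat A0 U V, A2H.Vmat, ?_, ?_⟩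
  · rw [A2H.stepA]
    exact A2H.stepB A0 U V
  · intro hP d
    rw [A2H.stepA]
    by_cases hd : A2H.Dp d
    · rw [← A2H.coeff_proj A0 U V hd]
      exact hP _
    · rw [A2H.coeff_det_eq_zero A0 U V hd]
      exact A2H.rfHasLim_zero
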